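/- arXiv:1412.7235 — 5 statements merged into one kernel-verified Lean document; each statement's English description precedes it below -/
import Mathlib

section
/- Let B : ℕ → ℕ → ℝ be defined by B(n,0) = α^n, B(0,m) = β^m, and B(n,m) = αβ(B(n,m-1) + B(n-1,m)) for n,m ≥ 1. Then for every n ≥ 0, the determinant of the (n+1)×(n+1) matrix (B(i,j))_{0 ≤ i,j ≤ n} equals (αβ)^(n²) · (α+β-1)^n. -/
open Matrix

private def Cf (c : ℝ) : ℕ → ℕ → ℝ
  | n, 0 => c ^ n
  | 0, m + 1 => c ^ (m + 1)
  | n + 1, m + 1 => c * (Cf c (n + 1) m + Cf c n (m + 1))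
termination_by n m => n + m

private lemma Cf_zero_right (c : ℝ) (n : ℕ) : Cf c n 0 = c ^ n := by
  cases n <;> simp [Cf]

private lemma Cf_zero_left (c : ℝ) (m : ℕ) : Cf c 0 m = c ^ m := by
  cases m <;> simp [Cf]

private lemma Cf_succ (c : ℝ) (n m : ℕ) :
    Cf c (n + 1) (m + 1) = c * (Cf c (n + 1) m + Cf c n (m + 1)) := by
  simp [Cf]

private lemma det_reduce (a b : ℝ) (n : ℕ) (M : ℕ → ℕ → ℝ)
    (hM00 : M 0 0 = 1)
    (hrow : ∀ j, M 0 (j + 1) = b * M 0 j)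
    (hcol : ∀ i, M (i + 1) 0 = a * M i 0) :
    Matrix.det (Matrix.of fun i j : Fin (n + 2) => M i j) =
      Matrix.det (Matrix.of fun i j : Fin (n + 1) =>
        M (i + 1) (j + 1) - a * M i (j + 1) - b * M (i + 1) j + a * b * M i j) := by
  set A : Matrix (Fin (n + 2)) (Fin (n + 2)) ℝ := Matrix.of fun i j => M i j with hA
  set P : Matrix (Fin (n + 2)) (Fin (n + 2)) ℝ :=
    Matrix.of fun i j => if (i : ℕ) = (j : ℕ) + 1 then -a else if i = j then 1 else 0 with hP
  set Q : Matrix (Fin (n + 2)) (Fin (n + 2)) ℝ :=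
    Matrix.of fun i j => if (j : ℕ) = (i : ℕ) + 1 then -b else if i = j then 1 else 0 with hQ
  have hPdet : P.det = 1 := by
    rw [Matrix.det_of_lowerTriangular]
    · simp [hP, Matrix.of_apply]
    · intro i j hij
      have h' : (i : ℕ) < (j : ℕ) := hij
      simp only [hP, Matrix.of_apply, Fin.ext_iff]
      split_ifs with h1 h2
      · omega
      · omega
      · rfl
  have hQdet : Q.det = 1 := by
    rw [Matrix.det_of_upperTriangular]
    · simp [hQ, Matrix.of_apply]
    · intro i j hij
      have h' : (j : ℕ) < (i : ℕ) := hij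
      simp only [hQ, Matrix.of_apply, Fin.ext_iff]
      split_ifs with h1 h2
      · omega
      · omega
      · rfl
  -- entries of P * A
  have hPA0 : ∀ j : Fin (n + 2), (P * A) 0 j = M 0 j := by
    intro j
    rw [Matrix.mul_apply, Finset.sum_eq_single 0]
    · simp [hP, hA]
    · intro k _ hk
      have : ¬((0 : Fin (n+2)) : ℕ) = (k : ℕ) + 1 := by
        simp only [Fin.val_zero]; omega
      simp [hP, this, Ne.symm hk]
    · simp
  have hPAs : ∀ (i : Fin (n + 1)) (j : Fin (n + 2)),
      (P * A) i.succ j = M (i + 1) j - a * M i j := by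
    intro i j
    rw [Matrix.mul_apply]
    have hterm : ∀ k : Fin (n + 2), P i.succ k * A k j =
        (if k = i.succ then M (i + 1) j else 0) +
        (if k = i.castSucc then -a * M i j else 0) := by
      intro k
      rcases eq_or_ne k i.castSucc with hk | hk
      · subst hk
        have h1 : ((i.succ : Fin (n+2)) : ℕ) = ((i.castSucc : Fin (n+2)) : ℕ) + 1 := by simp
        have h2 : (i.castSucc : Fin (n+2)) ≠ i.succ := by
          intro h
          have := congrArg (fun x : Fin (n+2) => (x : ℕ)) h
          simp at this
        simp [hP, hA, h1, h2]
      · rcases eq_or_ne k i.succ with hk2 | hk2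
        · subst hk2
          have h1 : ¬((i.succ : Fin (n+2)) : ℕ) = ((i.succ : Fin (n+2)) : ℕ) + 1 := by omega
          simp [hP, hA, h1, hk]
        · have hkv : (k : ℕ) ≠ ((i.castSucc : Fin (n+2)) : ℕ) := fun h => hk (Fin.ext h)
          have hc : ¬((i.succ : Fin (n+2)) : ℕ) = (k : ℕ) + 1 := by
            simp only [Fin.val_succ, Fin.coe_castSucc] at hkv ⊢
            omega
          simp only [hP, hA, Matrix.of_apply]
          rw [if_neg hc, if_neg (Ne.symm hk2)]
          simp [hk2, hk]
    rw [Finset.sum_congr rfl (fun k _ => hterm k), Finset.sum_add_distrib,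
      Finset.sum_ite_eq' Finset.univ i.succ, Finset.sum_ite_eq' Finset.univ i.castSucc]
    simp
    ring
  -- entries of (P * A) * Q
  have hE0 : ∀ (X : Matrix (Fin (n+2)) (Fin (n+2)) ℝ) (i : Fin (n + 2)),
      (X * Q) i 0 = X i 0 := by
    intro X i
    rw [Matrix.mul_apply, Finset.sum_eq_single 0]
    · simp [hQ]
    · intro k _ hk
      have : ¬((0 : Fin (n+2)) : ℕ) = (k : ℕ) + 1 := by
        simp only [Fin.val_zero]; omega
      simp [hQ, this, hk]
    · simp
  have hEs : ∀ (X : Matrix (Fin (n+2)) (Fin (n+2)) ℝ) (i : Fin (n + 2)) (j : Fin (n + 1)),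
      (X * Q) i j.succ = X i j.succ - b * X i j.castSucc := by
    intro X i j
    rw [Matrix.mul_apply]
    have hterm : ∀ k : Fin (n + 2), X i k * Q k j.succ =
        (if k = j.succ then X i j.succ else 0) +
        (if k = j.castSucc then -b * X i j.castSucc else 0) := by
      intro k
      rcases eq_or_ne k j.castSucc with hk | hk
      · subst hk
        have h1 : ((j.succ : Fin (n+2)) : ℕ) = ((j.castSucc : Fin (n+2)) : ℕ) + 1 := by simp
        have h2 : (j.castSucc : Fin (n+2)) ≠ j.succ := by
          intro h
          have := congrArg (fun x : Fin (n+2) => (x : ℕ)) h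
          simp at this
        simp [hQ, h1, h2]
        ring
      · rcases eq_or_ne k j.succ with hk2 | hk2
        · subst hk2
          have h1 : ¬((j.succ : Fin (n+2)) : ℕ) = ((j.succ : Fin (n+2)) : ℕ) + 1 := by omega
          simp [hQ, h1, hk]
        · have hkv : (k : ℕ) ≠ ((j.castSucc : Fin (n+2)) : ℕ) := fun h => hk (Fin.ext h)
          have hc : ¬((j.succ : Fin (n+2)) : ℕ) = (k : ℕ) + 1 := by
            simp only [Fin.val_succ, Fin.coe_castSucc] at hkv ⊢
            omega
          simp only [hQ, Matrix.of_apply]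
          rw [if_neg hc, if_neg hk2]
          simp [hk2, hk]
    rw [Finset.sum_congr rfl (fun k _ => hterm k), Finset.sum_add_distrib,
      Finset.sum_ite_eq' Finset.univ j.succ, Finset.sum_ite_eq' Finset.univ j.castSucc]
    simp
    ring
  have hdet : A.det = (P * A * Q).det := by
    rw [Matrix.det_mul, Matrix.det_mul, hPdet, hQdet, one_mul, mul_one]
  rw [hA] at hdet
  rw [hdet, Matrix.det_succ_row_zero, Finset.sum_eq_single 0]
  · have e00 : (P * A * Q) 0 0 = 1 := by
      rw [hE0, hPA0]; simpa using hM00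
    rw [e00, Fin.succAbove_zero]
    simp only [Fin.val_zero, pow_zero, one_mul, mul_one]
    congr 1
    ext i j
    simp only [Matrix.submatrix_apply, Matrix.of_apply]
    rw [hEs, hPAs, hPAs]
    simp only [Fin.val_succ, Fin.coe_castSucc]
    ring
  · intro j _ hj
    rcases Fin.eq_zero_or_eq_succ j with h | ⟨j', rfl⟩
    · exact absurd h hj
    · have : (P * A * Q) 0 j'.succ = 0 := by
        rw [hEs, hPA0, hPA0]
        simp only [Fin.val_succ, Fin.coe_castSucc]
        rw [hrow]
        ring
      rw [this]; ring
  · simp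

private lemma detA (c : ℝ) (M : ℕ → ℕ → ℝ)
    (h1 : ∀ n, M n 0 = c ^ n) (h2 : ∀ m, M 0 m = c ^ m)
    (h3 : ∀ n m, M (n + 1) (m + 1) = c * (M (n + 1) m + M n (m + 1))) :
    ∀ n : ℕ, Matrix.det (Matrix.of fun i j : Fin (n + 1) => M i j) = c ^ (n * (n + 1)) := by
  intro n
  induction n with
  | zero =>
      rw [Matrix.det_fin_one]
      simp [h1 0]
  | succ m ih =>
      rw [det_reduce c c m M (by simp [h1 0]) (fun j => by rw [h2, h2, pow_succ]; ring)
        (fun i => by rw [h1, h1, pow_succ]; ring)]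
      have hm : (Matrix.of fun i j : Fin (m + 1) =>
          M (i + 1) (j + 1) - c * M i (j + 1) - c * M (i + 1) j + c * c * M i j) =
          (c * c) • (Matrix.of fun i j : Fin (m + 1) => M i j) := by
        ext i j
        simp only [Matrix.of_apply, Matrix.smul_apply, smul_eq_mul, h3]
        ring
      rw [hm, Matrix.det_smul, ih, Fintype.card_fin, mul_pow, ← pow_add, ← pow_add]
      congr 1
      ring

private lemma key (α β : ℝ) (B : ℕ → ℕ → ℝ)
    (hB1 : ∀ n, B n 0 = α ^ n) (hB2 : ∀ m, B 0 m = β ^ m)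
    (hB3 : ∀ n m, B (n + 1) (m + 1) = α * β * (B (n + 1) m + B n (m + 1))) :
    ∀ i j, B (i + 1) (j + 1) - α * B i (j + 1) - β * B (i + 1) j + α * β * B i j =
      (α * β * (α + β - 1)) * Cf (α * β) i j := by
  intro i
  induction i with
  | zero =>
      intro j
      induction j with
      | zero => simp only [hB3, hB1, hB2, Cf_zero_left]; ring
      | succ j ihj =>
          rw [Cf_zero_left] at ihj ⊢
          rw [hB3 0 j] at ihj
          rw [hB3 0 (j + 1), hB3 0 j]
          simp only [hB2] at ihj ⊢
          linear_combination (α * β) * ihj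
  | succ i ihi =>
      intro j
      induction j with
      | zero =>
          have h0 := ihi 0
          rw [Cf_zero_right] at h0 ⊢
          rw [hB3 i 0] at h0
          rw [hB3 (i + 1) 0, hB3 i 0]
          simp only [hB1] at h0 ⊢
          linear_combination (α * β) * h0
      | succ j ihj =>
          rw [Cf_succ]
          linear_combination (α * β) * ihj + (α * β) * (ihi (j + 1)) + hB3 (i + 1) (j + 1) -
            α * hB3 i (j + 1) - β * hB3 (i + 1) j + (α * β) * hB3 i j

theorem stmt_2 (α β : ℝ) (B : ℕ → ℕ → ℝ)
    (hB1 : ∀ n, B n 0 = α ^ n) (hB2 : ∀ m, B 0 m = β ^ m)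
    (hB3 : ∀ n m, B (n + 1) (m + 1) = α * β * (B (n + 1) m + B n (m + 1))) :
    ∀ n : ℕ,
      Matrix.det (Matrix.of fun i j : Fin (n + 1) => B i j) =
        (α * β) ^ (n ^ 2) * (α + β - 1) ^ n := by
  intro n
  cases n with
  | zero =>
      rw [Matrix.det_fin_one]
      simp [hB1 0]
  | succ m =>
      rw [det_reduce α β m B (by simp [hB1 0]) (fun j => by rw [hB2, hB2, pow_succ]; ring)
        (fun i => by rw [hB1, hB1, pow_succ]; ring)]
      have hm : (Matrix.of fun i j : Fin (m + 1) =>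
          B (i + 1) (j + 1) - α * B i (j + 1) - β * B (i + 1) j + α * β * B i j) =
          (α * β * (α + β - 1)) • (Matrix.of fun i j : Fin (m + 1) => Cf (α * β) i j) := by
        ext i j
        simp only [Matrix.of_apply, Matrix.smul_apply, smul_eq_mul]
        exact key α β B hB1 hB2 hB3 i j
      rw [hm, Matrix.det_smul, Fintype.card_fin,
        detA (α * β) (Cf (α * β)) (Cf_zero_right _) (Cf_zero_left _) (Cf_succ _) m]
      rw [mul_pow, mul_right_comm, ← pow_add,
        show m + 1 + m * (m + 1) = (m + 1) ^ 2 from by ring]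
end

section
/- Let B : ℕ → ℕ → ℝ be defined by B(n,0) = α^n, B(0,m) = β^m, and B(n,m) = αβ(B(n,m-1) + B(n-1,m)) for n,m ≥ 1. If α+β ≠ 1, α ≠ 0, β ≠ 0, then for every n the matrix (B(i,j))_{0 ≤ i,j ≤ n} is invertible. -/
/-!
Difference the rows and then the columns of `(B i j)` with ratio `αβ`, and take the Schur
complement of the resulting pivot `1` in the corner. For `B` this leaves `αβ(α + β - 1)` times
the matrix of a deformed family `B'`, which obeys the recursion of `B` with the source term
`(1 - α)(1 - β) α^(n+1) β^(m+1)` added; for `B'` the same reduction gives `(αβ)²` times `B'`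
itself. Hence `det (B i j)_{i,j ≤ n} = (αβ(α + β - 1))^n (αβ)^(n(n-1))`.
-/

open Matrix

variable {R : Type*} [CommRing R]

theorem Matrix.det_eq_det_schur_of_apply_zero_zero_eq_one {n : ℕ}
    (M : Matrix (Fin (n + 2)) (Fin (n + 2)) R) (h : M 0 0 = 1) :
    M.det = (of fun i j : Fin (n + 1) => M i.succ j.succ - M i.succ 0 * M 0 j.succ).det := by
  set c : Fin (n + 2) → R := Fin.cons 0 fun j => M 0 j.succ
  set N : Matrix (Fin (n + 2)) (Fin (n + 2)) R := of fun i j => M i j - M i 0 * c j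
  have hN : M.det = N.det := by
    rw [← det_transpose M, ← det_transpose N]
    refine det_eq_of_forall_row_eq_smul_add_const c 0 rfl fun j i => ?_
    simp only [N, transpose_apply, of_apply, c, Fin.cons_zero, mul_zero, sub_zero]
    ring
  rw [hN, det_succ_row_zero, Fin.sum_univ_succ, Finset.sum_eq_zero fun j _ => by simp [N, c, h]]
  simp [N, c, h, Fin.succAbove_zero]
  rfl

def rowDiff (r : R) (f : ℕ → ℕ → R) : ℕ → ℕ → R
  | 0, j => f 0 j
  | i + 1, j => f (i + 1) j - r * f i j

def colDiff (r : R) (f : ℕ → ℕ → R) (i j : ℕ) : R :=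
  rowDiff r (fun j i => f i j) j i

theorem det_rowDiff (n : ℕ) (r : R) (f : ℕ → ℕ → R) :
    (of fun i j : Fin (n + 1) => rowDiff r f i j).det = (of fun i j : Fin (n + 1) => f i j).det :=
  (det_eq_of_forall_row_eq_smul_add_pred (A := of fun i j : Fin (n + 1) => f i j)
    (B := of fun i j => rowDiff r f i j) (fun _ => r) (fun _ => rfl)
    fun i j => by simp [rowDiff]).symm

theorem det_colDiff (n : ℕ) (r : R) (f : ℕ → ℕ → R) :
    (of fun i j : Fin (n + 1) => colDiff r f i j).det = (of fun i j : Fin (n + 1) => f i j).det := by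
  rw [← det_transpose, ← det_transpose (of _)]
  exact det_rowDiff n r fun j i => f i j

theorem det_succ_succ_eq_pow_mul_det (n : ℕ) (r lam : R) (f g : ℕ → ℕ → R) (h00 : f 0 0 = 1)
    (hschur : ∀ i j, colDiff r (rowDiff r f) (i + 1) (j + 1)
      - colDiff r (rowDiff r f) (i + 1) 0 * colDiff r (rowDiff r f) 0 (j + 1) = lam * g i j) :
    (of fun i j : Fin (n + 2) => f i j).det
      = lam ^ (n + 1) * (of fun i j : Fin (n + 1) => g i j).det := by
  rw [← det_rowDiff, ← det_colDiff,
    det_eq_det_schur_of_apply_zero_zero_eq_one _ (by simpa [colDiff, rowDiff]),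
    show lam ^ (n + 1) = lam ^ Fintype.card (Fin (n + 1)) by simp, ← det_smul]
  congr 1
  ext i j
  simpa using hschur i j

/-- `biMoment a b 0` is `B`, and `biMoment a b ((1 - a) * (1 - b))` is the deformed family `B'`. -/
def biMoment (a b c : R) : ℕ → ℕ → R
  | n, 0 => a ^ n
  | 0, m + 1 => b ^ (m + 1)
  | n + 1, m + 1 => a * b * (biMoment a b c (n + 1) m + biMoment a b c n (m + 1))
      + c * a ^ (n + 1) * b ^ (m + 1)

section biMoment

variable (a b c : R)

@[simp]
theorem biMoment_zero_right (n : ℕ) : biMoment a b c n 0 = a ^ n := by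
  cases n <;> simp [biMoment]

@[simp]
theorem biMoment_zero_left (m : ℕ) : biMoment a b c 0 m = b ^ m := by
  cases m <;> simp [biMoment]

theorem biMoment_succ_succ (n m : ℕ) :
    biMoment a b c (n + 1) (m + 1)
      = a * b * (biMoment a b c (n + 1) m + biMoment a b c n (m + 1))
        + c * a ^ (n + 1) * b ^ (m + 1) := by
  rw [biMoment]

theorem eq_biMoment_zero (B : ℕ → ℕ → R) (h0 : ∀ n, B n 0 = a ^ n) (h0' : ∀ m, B 0 m = b ^ m)
    (hsucc : ∀ n m, B (n + 1) (m + 1) = a * b * (B (n + 1) m + B n (m + 1))) :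
    B = biMoment a b 0 := by
  ext n m
  induction n generalizing m with
  | zero => simp [h0']
  | succ n ihn =>
    induction m with
    | zero => simp [h0]
    | succ m ihm => simp [hsucc, biMoment_succ_succ, ihm, ihn]

theorem sq_mul_biMoment_zero (n m : ℕ) :
    (a * b) ^ 2 * biMoment a b 0 n m
      = a * b * (a + b - 1) * biMoment a b ((1 - a) * (1 - b)) n m
        + (1 - a) * (1 - b) * a ^ (n + 1) * b ^ (m + 1) := by
  induction n generalizing m with
  | zero => simp; ring
  | succ n ihn =>
    induction m with
    | zero => simp; ring
    | succ m ihm =>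
      rw [biMoment_succ_succ, biMoment_succ_succ]
      linear_combination (a * b) * ihm + (a * b) * ihn (m + 1)

theorem det_biMoment_one_sub_mul_one_sub (n : ℕ) :
    (of fun i j : Fin (n + 1) => biMoment a b ((1 - a) * (1 - b)) i j).det
      = (a * b) ^ (n * (n + 1)) := by
  induction n with
  | zero => simp
  | succ n ih =>
    rw [det_succ_succ_eq_pow_mul_det n (a * b) ((a * b) ^ 2) _
      (biMoment a b ((1 - a) * (1 - b))) (by simp)
      fun i j => by
        simp only [colDiff, rowDiff, biMoment_succ_succ, biMoment_zero_left, biMoment_zero_right]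
        ring,
      ih]
    ring

theorem det_biMoment_zero (n : ℕ) :
    (of fun i j : Fin (n + 1) => biMoment a b 0 i j).det
      = (a * b * (a + b - 1)) ^ n * (a * b) ^ (n * (n - 1)) := by
  cases n with
  | zero => simp
  | succ n =>
    rw [det_succ_succ_eq_pow_mul_det n (a * b) (a * b * (a + b - 1)) _
      (biMoment a b ((1 - a) * (1 - b))) (by simp)
      fun i j => by
        simp only [colDiff, rowDiff, biMoment_succ_succ, biMoment_zero_left, biMoment_zero_right]
        linear_combination sq_mul_biMoment_zero a b i j,
      det_biMoment_one_sub_mul_one_sub, Nat.add_sub_cancel, mul_comm n]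

end biMoment

theorem stmt_3 (α β : ℝ) (hα : α ≠ 0) (hβ : β ≠ 0) (hsum : α + β ≠ 1)
    (B : ℕ → ℕ → ℝ)
    (hB1 : ∀ n, B n 0 = α ^ n) (hB2 : ∀ m, B 0 m = β ^ m)
    (hB3 : ∀ n m, B (n + 1) (m + 1) = α * β * (B (n + 1) m + B n (m + 1))) :
    ∀ n : ℕ, IsUnit (Matrix.of fun i j : Fin (n + 1) => B i j) := by
  intro n
  rw [eq_biMoment_zero α β B hB1 hB2 hB3, isUnit_iff_isUnit_det, det_biMoment_zero,
    isUnit_iff_ne_zero]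
  have hαβ : α * β ≠ 0 := mul_ne_zero hα hβ
  exact mul_ne_zero (pow_ne_zero _ (mul_ne_zero hαβ (sub_ne_zero.mpr hsum))) (pow_ne_zero _ hαβ)
end

section
/- Define polynomials P_n(x) and Q_m(y) in ℝ[x], ℝ[y] by P_0 = 1, P_n(x) = (x-α)(x-αβ)^(n-1) for n ≥ 1, and Q_0 = 1, Q_m(y) = (y-β)(y-αβ)^(m-1) for m ≥ 1. Let B : ℕ → ℕ → ℝ be the bi-moment matrix with B(n,0) = α^n, B(0,m) = β^m, B(n,m) = αβ(B(n,m-1)+B(n-1,m)) for n,m ≥ 1, and define L(P ⊗ Q) = Σ_{i,j} p_i q_j B(i,j) where p_i, q_j are the coefficients of P and Q. Then L(P_n ⊗ Q_m) = 0 whenever n ≠ m, and L(P_n ⊗ Q_n) = (αβ)^(2n-1)(α+β-1) for n ≥ 1, L(P_0 ⊗ Q_0) = 1. -/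
/-!
Multiplying both arguments of `L` by `x - αβ` multiplies `L` by `(αβ)²`: on moments this is the
recurrence for `B`. This peels common factors off `P_n ⊗ Q_m` until one side is `1` or `x - α`.
Since the first row of `B` is `βʲ`, `L(1 ⊗ R) = R(β)`, and similarly
`L((x - α) ⊗ (y - αβ) R) = αβ(α + β - 1) R(β)`; both vanish when `R = Q_k` with `k ≥ 1`.
The case `n > m` follows by transposing `B`, which swaps `α` and `β`.
-/

open Polynomial

/-- The bilinear form determined by the bi-moment matrix `B`:
`L(x^i ⊗ y^j) = B i j`, extended bilinearly. -/
def Lform (B : ℕ → ℕ → ℝ) (P Q : Polynomial ℝ) : ℝ :=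
  ∑ i ∈ P.support, ∑ j ∈ Q.support, P.coeff i * Q.coeff j * B i j

section Lform

variable (B : ℕ → ℕ → ℝ) (P Q : ℝ[X])

theorem Lform_eq_sum_of_subset {s t : Finset ℕ} (hs : P.support ⊆ s) (ht : Q.support ⊆ t) :
    Lform B P Q = ∑ i ∈ s, ∑ j ∈ t, P.coeff i * Q.coeff j * B i j := by
  refine Finset.sum_subset hs (fun i _ hi => ?_) |>.trans
    (Finset.sum_congr rfl fun i _ => Finset.sum_subset ht fun j _ hj => ?_)
  · simp [notMem_support_iff.mp hi]
  · simp [notMem_support_iff.mp hj]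

theorem Lform_transpose : Lform B P Q = Lform (fun i j => B j i) Q P := by
  rw [Lform, Lform, Finset.sum_comm]
  exact Finset.sum_congr rfl fun j _ => Finset.sum_congr rfl fun i _ => by ring

theorem Lform_smul_moments (c : ℝ) : Lform (fun i j => c * B i j) P Q = c * Lform B P Q := by
  simp only [Lform, Finset.mul_sum]
  exact Finset.sum_congr rfl fun i _ => Finset.sum_congr rfl fun j _ => by ring

theorem Lform_sub_smul_moments (B' : ℕ → ℕ → ℝ) (c : ℝ) :
    Lform (fun i j => B i j - c * B' i j) P Q = Lform B P Q - c * Lform B' P Q := by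
  simp only [Lform, Finset.mul_sum, ← Finset.sum_sub_distrib]
  exact Finset.sum_congr rfl fun i _ => Finset.sum_congr rfl fun j _ => by ring

theorem Lform_sub_left (P' : ℝ[X]) : Lform B (P - P') Q = Lform B P Q - Lform B P' Q := by
  have hsub : (P - P').support ⊆ P.support ∪ P'.support := by
    rw [sub_eq_add_neg, ← support_neg (p := P')]
    exact support_add
  rw [Lform_eq_sum_of_subset B _ Q hsub subset_rfl,
    Lform_eq_sum_of_subset B P Q Finset.subset_union_left subset_rfl,
    Lform_eq_sum_of_subset B P' Q Finset.subset_union_right subset_rfl, ← Finset.sum_sub_distrib]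
  refine Finset.sum_congr rfl fun i _ => ?_
  rw [← Finset.sum_sub_distrib]
  exact Finset.sum_congr rfl fun j _ => by rw [coeff_sub]; ring

theorem Lform_C_mul_left (c : ℝ) : Lform B (C c * P) Q = c * Lform B P Q := by
  have hsupp : (C c * P).support ⊆ P.support := by
    rw [← smul_eq_C_mul]
    exact support_smul c P
  rw [Lform_eq_sum_of_subset B _ Q hsupp subset_rfl, Lform, Finset.mul_sum]
  refine Finset.sum_congr rfl fun i _ => ?_
  rw [Finset.mul_sum]
  exact Finset.sum_congr rfl fun j _ => by rw [coeff_C_mul]; ring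

theorem Lform_X_mul_left : Lform B (X * P) Q = Lform (fun i j => B (i + 1) j) P Q := by
  have hdeg : (X * P).natDegree < P.natDegree + 1 + 1 :=
    Nat.lt_succ_of_le <| natDegree_mul_le.trans (by rw [natDegree_X, add_comm])
  rw [Lform_eq_sum_of_subset B _ Q (supp_subset_range hdeg) subset_rfl,
    Lform_eq_sum_of_subset _ P Q (supp_subset_range (Nat.lt_succ_self _)) subset_rfl,
    Finset.sum_range_succ']
  simp [coeff_X_mul]

theorem Lform_X_sub_C_mul_left (c : ℝ) :
    Lform B ((X - C c) * P) Q = Lform (fun i j => B (i + 1) j - c * B i j) P Q := by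
  rw [sub_mul, Lform_sub_left, Lform_X_mul_left, Lform_C_mul_left, Lform_sub_smul_moments]

theorem Lform_X_sub_C_mul_right (c : ℝ) :
    Lform B P ((X - C c) * Q) = Lform (fun i j => B i (j + 1) - c * B i j) P Q := by
  rw [Lform_transpose, Lform_X_sub_C_mul_left, Lform_transpose]

theorem support_one_subset {R : Type*} [Semiring R] : (1 : R[X]).support ⊆ {0} := by
  simpa using support_C_subset (a := (1 : R))

theorem Lform_one_one : Lform B 1 1 = B 0 0 := by
  simp [Lform_eq_sum_of_subset B 1 1 support_one_subset support_one_subset]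

theorem Lform_one_left_eq_mul_eval {s b : ℝ} (hrow : ∀ j, B 0 j = s * b ^ j) :
    Lform B 1 Q = s * Q.eval b := by
  rw [Lform_eq_sum_of_subset B 1 Q support_one_subset subset_rfl, eval_eq_sum, Polynomial.sum_def,
    Finset.sum_singleton, Finset.mul_sum]
  exact Finset.sum_congr rfl fun j _ => by rw [hrow]; simp; ring

end Lform

/-- `P_n = biorthPoly α (α * β) n` and `Q_m = biorthPoly β (α * β) m`. -/
noncomputable def biorthPoly (a c : ℝ) : ℕ → ℝ[X]
  | 0 => 1
  | n + 1 => (X - C a) * (X - C c) ^ n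

structure IsBiMoment (a b : ℝ) (B : ℕ → ℕ → ℝ) : Prop where
  apply_zero_right : ∀ n, B n 0 = a ^ n
  apply_zero_left : ∀ m, B 0 m = b ^ m
  apply_succ_succ : ∀ n m, B (n + 1) (m + 1) = a * b * (B (n + 1) m + B n (m + 1))

namespace IsBiMoment

variable {a b : ℝ} {B : ℕ → ℕ → ℝ}

theorem transpose (h : IsBiMoment a b B) : IsBiMoment b a (fun i j => B j i) where
  apply_zero_right := h.apply_zero_left
  apply_zero_left := h.apply_zero_right
  apply_succ_succ n m := by linear_combination h.apply_succ_succ m n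

variable (h : IsBiMoment a b B) (P Q : ℝ[X])
include h

/-- The recurrence for `B` says `(S₁ - ab)(S₂ - ab) B = (ab)² B`, `Sᵢ` the index shifts. -/
theorem Lform_X_sub_C_mul_mul_X_sub_C_mul :
    Lform B ((X - C (a * b)) * P) ((X - C (a * b)) * Q) = (a * b) ^ 2 * Lform B P Q := by
  have hmoments : (fun i j => B (i + 1) (j + 1) - a * b * B i (j + 1)
      - a * b * (B (i + 1) j - a * b * B i j)) = fun i j => (a * b) ^ 2 * B i j := by
    funext i j
    linear_combination h.apply_succ_succ i j
  rw [Lform_X_sub_C_mul_left, Lform_X_sub_C_mul_right, hmoments, Lform_smul_moments]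

theorem Lform_pow_mul_pow_mul (k : ℕ) :
    Lform B ((X - C (a * b)) ^ k * P) ((X - C (a * b)) ^ k * Q)
      = (a * b) ^ (2 * k) * Lform B P Q := by
  induction k with
  | zero => simp
  | succ k ih =>
    rw [pow_succ', mul_assoc, mul_assoc, h.Lform_X_sub_C_mul_mul_X_sub_C_mul, ih]
    ring

theorem Lform_one_left : Lform B 1 Q = Q.eval b :=
  (Lform_one_left_eq_mul_eval B Q fun j => (h.apply_zero_left j).trans (one_mul _).symm).trans
    (one_mul _)

theorem Lform_X_sub_C_X_sub_C : Lform B (X - C a) (X - C b) = a * b * (a + b - 1) := by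
  have hB11 := h.apply_succ_succ 0 0
  simp only [zero_add, h.apply_zero_right, h.apply_zero_left] at hB11
  rw [← mul_one (X - C a), ← mul_one (X - C b), Lform_X_sub_C_mul_left, Lform_X_sub_C_mul_right,
    Lform_one_one]
  simp only [hB11, h.apply_zero_right, h.apply_zero_left]
  ring

theorem Lform_X_sub_C_X_sub_C_mul :
    Lform B (X - C a) ((X - C (a * b)) * Q) = a * b * (a + b - 1) * Q.eval b := by
  rw [← mul_one (X - C a), Lform_X_sub_C_mul_left, Lform_X_sub_C_mul_right]
  refine Lform_one_left_eq_mul_eval _ Q fun j => ?_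
  rw [h.apply_succ_succ, h.apply_zero_left, h.apply_zero_left]
  ring

theorem Lform_biorthPoly_of_lt {n m : ℕ} (hnm : n < m) :
    Lform B (biorthPoly a (a * b) n) (biorthPoly b (a * b) m) = 0 := by
  obtain ⟨d, rfl⟩ := Nat.exists_eq_add_of_lt hnm
  cases n with
  | zero => simp [biorthPoly, h.Lform_one_left]
  | succ k =>
    have hQ : biorthPoly b (a * b) (k + 1 + d + 1)
        = (X - C (a * b)) ^ k * ((X - C (a * b)) * ((X - C b) * (X - C (a * b)) ^ d)) := by
      simp only [biorthPoly]
      ring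
    rw [biorthPoly, mul_comm, hQ, h.Lform_pow_mul_pow_mul, h.Lform_X_sub_C_X_sub_C_mul]
    simp

theorem Lform_biorthPoly_succ_self (n : ℕ) :
    Lform B (biorthPoly a (a * b) (n + 1)) (biorthPoly b (a * b) (n + 1))
      = (a * b) ^ (2 * n + 1) * (a + b - 1) := by
  rw [biorthPoly, biorthPoly, mul_comm, mul_comm (X - C b), h.Lform_pow_mul_pow_mul,
    h.Lform_X_sub_C_X_sub_C]
  ring

end IsBiMoment

theorem stmt_4 (α β : ℝ) (B : ℕ → ℕ → ℝ)
    (hB1 : ∀ n, B n 0 = α ^ n) (hB2 : ∀ m, B 0 m = β ^ m)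
    (hB3 : ∀ n m, B (n + 1) (m + 1) = α * β * (B (n + 1) m + B n (m + 1)))
    (P Q : ℕ → Polynomial ℝ)
    (hP0 : P 0 = 1) (hP : ∀ n, 1 ≤ n → P n = (X - C α) * (X - C (α * β)) ^ (n - 1))
    (hQ0 : Q 0 = 1) (hQ : ∀ m, 1 ≤ m → Q m = (X - C β) * (X - C (α * β)) ^ (m - 1)) :
    (∀ n m, n ≠ m → Lform B (P n) (Q m) = 0) ∧
      (∀ n, 1 ≤ n → Lform B (P n) (Q n) = (α * β) ^ (2 * n - 1) * (α + β - 1)) ∧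
      Lform B (P 0) (Q 0) = 1 := by
  have h : IsBiMoment α β B := ⟨hB1, hB2, hB3⟩
  have hPeq : P = biorthPoly α (α * β) := by
    funext n
    cases n with
    | zero => exact hP0
    | succ n => exact hP (n + 1) n.succ_pos
  have hQeq : Q = biorthPoly β (α * β) := by
    funext m
    cases m with
    | zero => exact hQ0
    | succ m => exact hQ (m + 1) m.succ_pos
  subst hPeq hQeq
  refine ⟨fun n m hnm => ?_, fun n hn => ?_, ?_⟩
  · rcases hnm.lt_or_gt with hlt | hgt
    · exact h.Lform_biorthPoly_of_lt hlt
    · rw [Lform_transpose, mul_comm α β]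
      exact h.transpose.Lform_biorthPoly_of_lt hgt
  · obtain ⟨k, rfl⟩ := Nat.exists_eq_add_of_le' hn
    rw [h.Lform_biorthPoly_succ_self, show 2 * (k + 1) - 1 = 2 * k + 1 by omega]
  · simp [biorthPoly, h.Lform_one_left]
end

section
/- Let X̂ and Ŷ be the infinite matrices (indexed by ℕ) defined by: X̂(0,0) = α, X̂(0,1) = √(αβ(α+β-1)), X̂(n,n) = αβ and X̂(n,n+1) = αβ for n ≥ 1, all other entries zero; Ŷ(0,0) = β, Ŷ(1,0) = √(αβ(α+β-1)), Ŷ(n,n) = αβ and Ŷ(n+1,n) = αβ for n ≥ 1, all other entries zero. Then X̂·Ŷ = αβ·(X̂ + Ŷ). -/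
/-- Entrywise product of infinite (row/column finite) matrices, via `tsum`. -/
noncomputable def mulInf (f g : ℕ → ℕ → ℝ) (i j : ℕ) : ℝ := ∑' k, f i k * g k j

/-- The normalized bidiagonal matrix `X̂`. -/
noncomputable def Xhat (α β : ℝ) (i j : ℕ) : ℝ :=
  if i = 0 ∧ j = 0 then α
  else if i = 0 ∧ j = 1 then Real.sqrt (α * β * (α + β - 1))
  else if j = i then α * β
  else if j = i + 1 then α * β
  else 0

/-- The normalized bidiagonal matrix `Ŷ`. -/
noncomputable def Yhat (α β : ℝ) (i j : ℕ) : ℝ :=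
  if i = 0 ∧ j = 0 then β
  else if i = 1 ∧ j = 0 then Real.sqrt (α * β * (α + β - 1))
  else if i = j then α * β
  else if i = j + 1 then α * β
  else 0

lemma Xhat_zero (α β : ℝ) (i k : ℕ) (hk : k ≠ i) (hk' : k ≠ i + 1) :
    Xhat α β i k = 0 := by
  unfold Xhat; split_ifs with h1 h2 h3 h4 <;> first | rfl | omega

theorem stmt_7 (α β : ℝ) (h : 0 ≤ α * β * (α + β - 1)) :
    ∀ i j, mulInf (Xhat α β) (Yhat α β) i j =
      α * β * (Xhat α β i j + Yhat α β i j) := by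
  intro i j
  have hsum : mulInf (Xhat α β) (Yhat α β) i j =
      Xhat α β i i * Yhat α β i j + Xhat α β i (i+1) * Yhat α β (i+1) j := by
    unfold mulInf
    rw [tsum_eq_sum (s := {i, i+1}) ?_]
    · rw [Finset.sum_insert (by simp), Finset.sum_singleton]
    · intro k hk
      simp only [Finset.mem_insert, Finset.mem_singleton, not_or] at hk
      rw [Xhat_zero α β i k hk.1 hk.2, zero_mul]
  rw [hsum]
  have hs : Real.sqrt (α * β * (α + β - 1)) * Real.sqrt (α * β * (α + β - 1)) =
      α * β * (α + β - 1) := Real.mul_self_sqrt h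
  match i, j with
  | 0, 0 => simp [Xhat, Yhat]; nlinarith [hs]
  | 0, 1 => simp [Xhat, Yhat]; ring
  | 0, (j+2) => simp [Xhat, Yhat]
  | 1, 0 => simp [Xhat, Yhat]
  | 1, 1 => simp [Xhat, Yhat]; ring
  | 1, 2 => simp [Xhat, Yhat]
  | 1, (j+3) => simp [Xhat, Yhat]
  | (i+2), j =>
    have h1 : ¬ (i + 2 = 0 ∧ j = 0) := by omega
    have h2 : ¬ (i + 2 = 0 ∧ j = 1) := by omega
    have h3 : ¬ (i + 3 = 0 ∧ j = 0) := by omega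
    have h4 : ¬ (i + 3 = 1 ∧ j = 0) := by omega
    have h5 : ¬ (i + 2 = 1 ∧ j = 0) := by omega
    simp only [Xhat, Yhat, if_neg h1, if_neg h2, if_neg h3, if_neg h4, if_neg h5,
      if_pos rfl]
    rcases eq_or_ne (i+2) j with hj | hj
    · subst hj
      simp; ring
    · rcases eq_or_ne (i+2) (j+1) with hj' | hj'
      · have : j = i + 1 := by omega
        subst this
        norm_num
      · rcases eq_or_ne (i+3) j with hj'' | hj''
        · subst hj''
          norm_num
        · have e1 : i + 2 ≠ j := hj
          have e2 : ¬ j = i + 2 := fun h => hj h.symm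
          have e3 : ¬ j = i + 2 + 1 := by omega
          have e4 : ¬ i + 3 = j + 1 := by omega
          simp [e1, e2, e3, e4, hj', hj'']
end

section
/- Let X̂, Ŷ be the bidiagonal matrices with X̂(0,0) = α, X̂(0,1) = √(αβ(α+β-1)), X̂(n,n) = X̂(n,n+1) = αβ for n ≥ 1, and Ŷ = transpose pattern: Ŷ(0,0) = β, Ŷ(1,0) = √(αβ(α+β-1)), Ŷ(n,n) = Ŷ(n+1,n) = αβ for n ≥ 1. Then W = X̂·Ŷ is the symmetric tridiagonal matrix with W(0,0) = αβ(α+β), W(0,1) = W(1,0) = αβ·√(αβ(α+β-1)), W(n,n) = 2(αβ)² for n ≥ 1, and W(n,n+1) = W(n+1,n) = (αβ)² for n ≥ 1, all other entries zero. -/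
lemma Xhat_vanish (α β : ℝ) {i k : ℕ} (h1 : k ≠ i) (h2 : k ≠ i + 1) :
    Xhat α β i k = 0 := by
  unfold Xhat
  rw [if_neg (by omega), if_neg (by omega), if_neg (by omega), if_neg (by omega)]

lemma mulInf_two (α β : ℝ) (i j : ℕ) :
    mulInf (Xhat α β) (Yhat α β) i j =
      Xhat α β i i * Yhat α β i j + Xhat α β i (i+1) * Yhat α β (i+1) j := by
  unfold mulInf
  rw [tsum_eq_sum (s := {i, i+1}) ?_]
  · rw [Finset.sum_insert (by simp), Finset.sum_singleton]
  · intro k hk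
    simp only [Finset.mem_insert, Finset.mem_singleton, not_or] at hk
    rw [Xhat_vanish α β hk.1 hk.2, zero_mul]

theorem stmt_9 (α β : ℝ) (h : 0 ≤ α * β * (α + β - 1))
    (W : ℕ → ℕ → ℝ) (hW : W = mulInf (Xhat α β) (Yhat α β)) :
    W 0 0 = α * β * (α + β) ∧
      W 0 1 = α * β * Real.sqrt (α * β * (α + β - 1)) ∧
      W 1 0 = α * β * Real.sqrt (α * β * (α + β - 1)) ∧
      (∀ n, 1 ≤ n → W n n = 2 * (α * β) ^ 2) ∧
      (∀ n, 1 ≤ n → W n (n + 1) = (α * β) ^ 2 ∧ W (n + 1) n = (α * β) ^ 2) ∧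
      (∀ i j, i ≠ j → j ≠ i + 1 → i ≠ j + 1 → W i j = 0) := by
  subst hW
  have hs := Real.mul_self_sqrt h
  refine ⟨?_, ?_, ?_, ?_, ?_, ?_⟩
  · rw [mulInf_two]
    simp only [Xhat, Yhat]; norm_num
    nlinarith [hs]
  · rw [mulInf_two]
    simp only [Xhat, Yhat]; norm_num
    ring
  · rw [mulInf_two]
    simp only [Xhat, Yhat]; norm_num
  · intro n hn
    rw [mulInf_two]
    have h1 : Xhat α β n n = α * β := by
      unfold Xhat; rw [if_neg (by omega), if_neg (by omega), if_pos (by omega)]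
    have h2 : Xhat α β n (n+1) = α * β := by
      unfold Xhat; rw [if_neg (by omega), if_neg (by omega), if_neg (by omega),
        if_pos (by omega)]
    have h3 : Yhat α β n n = α * β := by
      unfold Yhat; rw [if_neg (by omega), if_neg (by omega), if_pos (by omega)]
    have h4 : Yhat α β (n+1) n = α * β := by
      unfold Yhat; rw [if_neg (by omega), if_neg (by omega), if_neg (by omega),
        if_pos (by omega)]
    rw [h1, h2, h3, h4]; ring
  · intro n hn
    have h1 : Xhat α β n n = α * β := by
      unfold Xhat; rw [if_neg (by omega), if_neg (by omega), if_pos (by omega)]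
    have h2 : Xhat α β n (n+1) = α * β := by
      unfold Xhat; rw [if_neg (by omega), if_neg (by omega), if_neg (by omega),
        if_pos (by omega)]
    have h1' : Xhat α β (n+1) (n+1) = α * β := by
      unfold Xhat; rw [if_neg (by omega), if_neg (by omega), if_pos (by omega)]
    have h2' : Xhat α β (n+1) (n+2) = α * β := by
      unfold Xhat; rw [if_neg (by omega), if_neg (by omega), if_neg (by omega),
        if_pos (by omega)]
    have h3 : Yhat α β n (n+1) = 0 := by
      unfold Yhat; rw [if_neg (by omega), if_neg (by omega), if_neg (by omega),
        if_neg (by omega)]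
    have h4 : Yhat α β (n+1) (n+1) = α * β := by
      unfold Yhat; rw [if_neg (by omega), if_neg (by omega), if_pos (by omega)]
    have h5 : Yhat α β (n+1) n = α * β := by
      unfold Yhat; rw [if_neg (by omega), if_neg (by omega), if_neg (by omega),
        if_pos (by omega)]
    have h6 : Yhat α β (n+2) n = 0 := by
      unfold Yhat; rw [if_neg (by omega), if_neg (by omega), if_neg (by omega),
        if_neg (by omega)]
    constructor <;> rw [mulInf_two]
    · rw [h1, h2, h3, h4]; ring
    · rw [h1', h2', h5, h6]; ring
  · intro i j hij hji1 hij1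
    rw [mulInf_two]
    have h3 : Yhat α β i j = 0 := by
      unfold Yhat; rw [if_neg (by omega), if_neg (by omega), if_neg (by omega),
        if_neg (by omega)]
    have h4 : Yhat α β (i+1) j = 0 := by
      unfold Yhat; rw [if_neg (by omega), if_neg (by omega), if_neg (by omega),
        if_neg (by omega)]
    rw [h3, h4]; ring
end
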